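/- Let (y_n) be the sequence generated by the LCM algorithm. If (y_n) is bounded, then (y_n) has at least one accumulation point lying in Z = {y : V̇(y) = 0}. In particular, if (y_n) converges, its limit lies in Z. -/

import Mathlib

/-!
Along the iteration `V` drops by at least `λ η_n |V̇(y_n)|` and stays nonnegative, so
`η_n V̇(y_n) → 0`. At a limit point `y*` with `V̇(y*) < 0` the accepted steps along the subsequence
must therefore shrink to `0`. A trial step is `f2` times the previous accepted one, so a small
step is only reached after a rejected trial `f1 η_j` at an index `j` whose iterate is close to
`y_n`. Rejection says that the difference quotient of `V` in direction `F(y_j)` exceeds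
`λ V̇(y_j)`; by strict differentiability of `V` these quotients tend to `V̇(y*)`, whence
`V̇(y*) ≥ λ V̇(y*)`, impossible for `λ < 1`.
-/

open Filter

/-- The Lyapunov derivative `V̇(y) = ⟪∇V(y), F(y)⟫`. -/
noncomputable def lyapDeriv {m : ℕ}
    (F : EuclideanSpace ℝ (Fin m) → EuclideanSpace ℝ (Fin m))
    (V : EuclideanSpace ℝ (Fin m) → ℝ) (y : EuclideanSpace ℝ (Fin m)) : ℝ :=
  inner ℝ (gradient V y) (F y)

/-- `f(y,η) = V(y + η F(y)) − V(y) − λ η V̇(y)`. -/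
noncomputable def armijoGap {m : ℕ}
    (F : EuclideanSpace ℝ (Fin m) → EuclideanSpace ℝ (Fin m))
    (V : EuclideanSpace ℝ (Fin m) → ℝ) (lam : ℝ)
    (y : EuclideanSpace ℝ (Fin m)) (η : ℝ) : ℝ :=
  V (y + η • F y) - V y - lam * η * lyapDeriv F V y

/-- The LCM algorithm: `y_{n+1} = y_n + η_n F(y_n)` with `η_n = f2 · η_{n-1} · f1^{-p_n}`
(convention `η_{-1} = η_init / f2`, so the trial step at stage `n = 0` starts from `η_init`),
where `p_n` is the least `k ∈ ℕ` such that `f(y_n, f2 · η_{n-1} · f1^{-k}) ≤ 0`. -/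
def IsLCM {m : ℕ}
    (F : EuclideanSpace ℝ (Fin m) → EuclideanSpace ℝ (Fin m))
    (V : EuclideanSpace ℝ (Fin m) → ℝ) (lam ηinit f1 f2 : ℝ)
    (y : ℕ → EuclideanSpace ℝ (Fin m)) (η : ℕ → ℝ) : Prop :=
  ∀ n, y (n + 1) = y n + η n • F (y n) ∧
    ∃ p : ℕ, η n = (if n = 0 then ηinit else f2 * η (n - 1)) / f1 ^ p ∧
      armijoGap F V lam (y n) (η n) ≤ 0 ∧
      ∀ k < p, ¬ armijoGap F V lam (y n) ((if n = 0 then ηinit else f2 * η (n - 1)) / f1 ^ k) ≤ 0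

open Set Asymptotics Topology

theorem HasStrictFDerivAt.tendsto_slope {𝕜 E ι : Type*} [NontriviallyNormedField 𝕜]
    [NormedAddCommGroup E] [NormedSpace 𝕜 E] {l : Filter ι} {V : E → 𝕜} {V' : E →L[𝕜] 𝕜}
    {a d : E} {z w : ι → E} {s : ι → 𝕜} (hV : HasStrictFDerivAt V V' a)
    (hz : Tendsto z l (𝓝 a)) (hs : Tendsto s l (𝓝 0)) (hs0 : ∀ᶠ k in l, s k ≠ 0)
    (hw : Tendsto w l (𝓝 d)) :
    Tendsto (fun k => (V (z k + s k • w k) - V (z k)) / s k) l (𝓝 (V' d)) := by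
  have hpair : Tendsto (fun k => (z k + s k • w k, z k)) l (𝓝 (a, a)) := by
    simpa using (hz.add (hs.smul hw)).prodMk_nhds hz
  have hlo := (hasStrictFDerivAt_iff_isLittleO.mp hV).comp_tendsto hpair
  simp only [Function.comp_def, add_sub_cancel_left, map_smul] at hlo
  have hbig : (fun k => s k • w k) =O[l] s := by
    simpa using (isBigO_refl s l).smul (hw.isBigO_one 𝕜)
  have hlim : Tendsto (fun k => (V (z k + s k • w k) - V (z k) - s k * V' (w k)) / s k
      + V' (w k)) l (𝓝 (V' d)) := by
    simpa using (hlo.trans_isBigO hbig).tendsto_div_nhds_zero.add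
      ((V'.continuous.tendsto d).comp hw)
  refine hlim.congr' ?_
  filter_upwards [hs0] with k hk
  field_simp
  ring

variable {m : ℕ} {F : EuclideanSpace ℝ (Fin m) → EuclideanSpace ℝ (Fin m)}
  {V : EuclideanSpace ℝ (Fin m) → ℝ} {lam ηinit f1 f2 : ℝ}

theorem lyapDeriv_eq_fderiv (y : EuclideanSpace ℝ (Fin m)) :
    lyapDeriv F V y = fderiv ℝ V y (F y) := by
  rw [lyapDeriv, ← toDual_gradient, InnerProductSpace.toDual_apply_apply]

theorem continuous_lyapDeriv (hF : Continuous F) (hV : ContDiff ℝ 1 V) :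
    Continuous (lyapDeriv F V) := by
  simp only [funext lyapDeriv_eq_fderiv]
  exact (hV.continuous_fderiv one_ne_zero).clm_apply hF

theorem lyapDeriv_le_of_armijoGap_pos {ι : Type*} {l : Filter ι} [l.NeBot]
    (hF : Continuous F) (hV : ContDiff ℝ 1 V) {a : EuclideanSpace ℝ (Fin m)}
    {z : ι → EuclideanSpace ℝ (Fin m)} {s : ι → ℝ} (hz : Tendsto z l (𝓝 a))
    (hs : Tendsto s l (𝓝 0)) (hs0 : ∀ k, 0 < s k)
    (hgap : ∀ k, 0 < armijoGap F V lam (z k) (s k)) :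
    lam * lyapDeriv F V a ≤ lyapDeriv F V a := by
  have hslope := (hV.hasStrictFDerivAt one_ne_zero).tendsto_slope hz hs
    (.of_forall fun k => (hs0 k).ne') ((hF.tendsto a).comp hz)
  rw [← lyapDeriv_eq_fderiv] at hslope
  refine le_of_tendsto_of_tendsto' (((continuous_lyapDeriv hF hV).tendsto a).comp hz
    |>.const_mul lam) hslope fun k => ?_
  have hk := hgap k
  rw [armijoGap] at hk
  simp only [Function.comp_apply]
  rw [le_div_iff₀ (hs0 k)]
  linarith

namespace IsLCM

variable {y : ℕ → EuclideanSpace ℝ (Fin m)} {η : ℕ → ℝ}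

theorem step_pos (h : IsLCM F V lam ηinit f1 f2 y η) (hηinit : 0 < ηinit) (hf1 : 0 < f1)
    (hf2 : 0 < f2) (n : ℕ) : 0 < η n := by
  induction n with
  | zero =>
    obtain ⟨-, p, hp, -⟩ := h 0
    rw [hp, if_pos rfl]
    positivity
  | succ n ih =>
    obtain ⟨-, p, hp, -⟩ := h (n + 1)
    rw [hp, if_neg n.succ_ne_zero, Nat.add_sub_cancel]
    positivity

theorem sub_le_mul_lyapDeriv (h : IsLCM F V lam ηinit f1 f2 y η) (n : ℕ) :
    V (y (n + 1)) - V (y n) ≤ lam * η n * lyapDeriv F V (y n) := by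
  obtain ⟨hstep, -, -, hgap, -⟩ := h n
  rw [armijoGap, ← hstep] at hgap
  linarith

theorem tendsto_step_mul_lyapDeriv (h : IsLCM F V lam ηinit f1 f2 y η) (hlam : 0 < lam)
    (hη : ∀ n, 0 < η n) (hV0 : ∀ y, 0 ≤ V y) (hVdot : ∀ y, lyapDeriv F V y ≤ 0) :
    Tendsto (fun n => η n * lyapDeriv F V (y n)) atTop (𝓝 0) := by
  have hdescent := h.sub_le_mul_lyapDeriv
  have hnonpos : ∀ n, lam * η n * lyapDeriv F V (y n) ≤ 0 := fun n =>
    mul_nonpos_of_nonneg_of_nonpos (mul_pos hlam (hη n)).le (hVdot _)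
  have hanti : Antitone (fun n => V (y n)) :=
    antitone_nat_of_succ_le fun n => by linarith [hdescent n, hnonpos n]
  have hlim := tendsto_atTop_ciInf hanti ⟨0, by rintro _ ⟨n, rfl⟩; exact hV0 _⟩
  have hdiff : Tendsto (fun n => V (y (n + 1)) - V (y n)) atTop (𝓝 0) := by
    simpa using (hlim.comp (tendsto_add_atTop_nat 1)).sub hlim
  have hscaled := (tendsto_of_tendsto_of_tendsto_of_le_of_le hdiff tendsto_const_nhds
    hdescent hnonpos).const_mul lam⁻¹
  simpa [mul_assoc, inv_mul_cancel_left₀ hlam.ne'] using hscaled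

theorem armijoGap_pos_or_eq (h : IsLCM F V lam ηinit f1 f2 y η) (hf1 : 0 < f1) (n : ℕ) :
    0 < armijoGap F V lam (y n) (f1 * η n) ∨
      η n = if n = 0 then ηinit else f2 * η (n - 1) := by
  obtain ⟨-, p, hp, -, hmin⟩ := h n
  cases p with
  | zero => exact .inr (by simpa using hp)
  | succ q =>
    have hfail := hmin q q.lt_succ_self
    have hprev : (if n = 0 then ηinit else f2 * η (n - 1)) / f1 ^ q = f1 * η n := by
      rw [hp, pow_succ]
      field_simp
    rw [hprev, not_le] at hfail
    exact .inl hfail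

theorem exists_armijoGap_pos_near (h : IsLCM F V lam ηinit f1 f2 y η) (hηinit : 0 < ηinit)
    (hf1 : 0 < f1) (hf2 : 1 < f2) {M : ℝ} (hM : ∀ n, ‖F (y n)‖ ≤ M) (n : ℕ)
    (hn : η n < ηinit) :
    ∃ j, 0 < armijoGap F V lam (y j) (f1 * η j) ∧ η j ≤ η n ∧
      ‖y j - y n‖ ≤ M / (f2 - 1) * η n := by
  have hη := h.step_pos hηinit hf1 (by linarith)
  have hC : 0 ≤ M / (f2 - 1) := div_nonneg ((norm_nonneg _).trans (hM 0)) (by linarith)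
  induction n with
  | zero =>
    rcases h.armijoGap_pos_or_eq hf1 0 with hgap | heq
    · exact ⟨0, hgap, le_rfl, by simpa using mul_nonneg hC (hη 0).le⟩
    · simp [heq] at hn
  | succ n ih =>
    rcases h.armijoGap_pos_or_eq hf1 (n + 1) with hgap | heq
    · exact ⟨n + 1, hgap, le_rfl, by simpa using mul_nonneg hC (hη _).le⟩
    simp only [n.succ_ne_zero, if_false, Nat.add_sub_cancel] at heq
    -- Accepted trials grow by the factor `f2`, so the way back to the last rejection has length
    -- at most `M * η n * ∑ i ≥ 1, f2⁻¹ ^ i`.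
    obtain ⟨j, hgap, hηj, hyj⟩ := ih (by nlinarith [hη n])
    refine ⟨j, hgap, by nlinarith [hη n], ?_⟩
    have hstep : ‖y n - y (n + 1)‖ ≤ η n * M := by
      rw [(h n).1, sub_add_cancel_left, norm_neg, norm_smul, Real.norm_of_nonneg (hη n).le]
      exact mul_le_mul_of_nonneg_left (hM n) (hη n).le
    have hgeom : M / (f2 - 1) * η (n + 1) = M / (f2 - 1) * η n + η n * M := by
      rw [heq]
      field_simp [(by linarith : f2 - 1 ≠ 0)]
      ring
    linarith [norm_sub_le_norm_sub_add_norm_sub (y j) (y n) (y (n + 1))]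

theorem exists_armijoGap_pos_tendsto (h : IsLCM F V lam ηinit f1 f2 y η)
    (hηinit : 0 < ηinit) (hf1 : 0 < f1) (hf2 : 1 < f2) {M : ℝ} (hM : ∀ n, ‖F (y n)‖ ≤ M)
    {φ : ℕ → ℕ} {a : EuclideanSpace ℝ (Fin m)} (hηφ : Tendsto (η ∘ φ) atTop (𝓝 0))
    (hyφ : Tendsto (y ∘ φ) atTop (𝓝 a)) :
    ∃ j : ℕ → ℕ, (∀ k, 0 < armijoGap F V lam (y (j k)) (f1 * η (j k))) ∧
      Tendsto (η ∘ j) atTop (𝓝 0) ∧ Tendsto (y ∘ j) atTop (𝓝 a) := by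
  obtain ⟨N, hN⟩ := eventually_atTop.mp (hηφ.eventually_lt_const hηinit)
  have hηφN := hηφ.comp (tendsto_add_atTop_nat N)
  choose j hgap hηj hyj using fun k =>
    h.exists_armijoGap_pos_near hηinit hf1 hf2 hM (φ (k + N)) (hN _ (N.le_add_left k))
  refine ⟨j, hgap, squeeze_zero (fun k => (h.step_pos hηinit hf1 (by linarith) _).le) hηj
    hηφN, ?_⟩
  have hdist : Tendsto (fun k => y (j k) - y (φ (k + N))) atTop (𝓝 0) :=
    squeeze_zero_norm hyj (by simpa using hηφN.const_mul (M / (f2 - 1)))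
  simpa [Function.comp_def] using hdist.add (hyφ.comp (tendsto_add_atTop_nat N))

theorem lyapDeriv_eq_zero_of_tendsto (h : IsLCM F V lam ηinit f1 f2 y η)
    (hlam : lam ∈ Ioo (0 : ℝ) 1) (hηinit : 0 < ηinit) (hf1 : 0 < f1) (hf2 : 1 < f2)
    (hF : Continuous F) (hV : ContDiff ℝ 1 V) (hV0 : ∀ y, 0 ≤ V y)
    (hVdot : ∀ y, lyapDeriv F V y ≤ 0) {M : ℝ} (hM : ∀ n, ‖F (y n)‖ ≤ M) {φ : ℕ → ℕ}
    {a : EuclideanSpace ℝ (Fin m)} (hφ : Tendsto φ atTop atTop)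
    (hyφ : Tendsto (y ∘ φ) atTop (𝓝 a)) :
    lyapDeriv F V a = 0 := by
  by_contra hne
  have hη := h.step_pos hηinit hf1 (by linarith)
  have hlyap := ((continuous_lyapDeriv hF hV).tendsto a).comp hyφ
  have hηφ : Tendsto (η ∘ φ) atTop (𝓝 0) := by
    have hquot := ((h.tendsto_step_mul_lyapDeriv hlam.1 hη hV0 hVdot).comp hφ).div hlyap hne
    rw [zero_div] at hquot
    refine hquot.congr' ?_
    filter_upwards [hlyap.eventually_ne hne] with k hk
    simp only [Function.comp_apply, Pi.div_apply] at hk ⊢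
    field_simp
  obtain ⟨j, hgap, hηj, hyj⟩ := h.exists_armijoGap_pos_tendsto hηinit hf1 hf2 hM hηφ hyφ
  have hle := lyapDeriv_le_of_armijoGap_pos hF hV hyj (by simpa using hηj.const_mul f1)
    (fun k => mul_pos hf1 (hη _)) hgap
  nlinarith [lt_of_le_of_ne (hVdot a) hne, hlam.2]

end IsLCM

/-- **LCM limit point.** If the sequence generated by LCM is bounded, it has at least one
accumulation point lying in `Z = {y | V̇(y) = 0}`; in particular, if it converges, its limit
lies in `Z`. -/
theorem lcm_has_accumulation_point_in_Z
    {m : ℕ} (lam ηinit f1 f2 : ℝ)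
    (hlam : lam ∈ Set.Ioo (0 : ℝ) 1) (hηinit : 0 < ηinit) (hf1 : 1 < f1) (hf2 : 1 < f2)
    (F : EuclideanSpace ℝ (Fin m) → EuclideanSpace ℝ (Fin m))
    (V : EuclideanSpace ℝ (Fin m) → ℝ)
    (hF : Continuous F) (hV : ContDiff ℝ 2 V) (hV0 : ∀ y, 0 ≤ V y)
    (hVdot : ∀ y, lyapDeriv F V y ≤ 0)
    (y : ℕ → EuclideanSpace ℝ (Fin m)) (η : ℕ → ℝ)
    (halg : IsLCM F V lam ηinit f1 f2 y η)
    (hbdd : Bornology.IsBounded (Set.range y)) :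
    (∃ ystar : EuclideanSpace ℝ (Fin m),
      lyapDeriv F V ystar = 0 ∧
      ∃ φ : ℕ → ℕ, StrictMono φ ∧ Tendsto (y ∘ φ) atTop (nhds ystar)) ∧
    (∀ l : EuclideanSpace ℝ (Fin m), Tendsto y atTop (nhds l) → lyapDeriv F V l = 0) := by
  obtain ⟨M, hM⟩ := (hbdd.isCompact_closure.image hF).isBounded.exists_norm_le
  have hMy : ∀ n, ‖F (y n)‖ ≤ M := fun n =>
    hM _ (mem_image_of_mem F (subset_closure (mem_range_self n)))
  have hlimit {φ : ℕ → ℕ} {a} (hφ : Tendsto φ atTop atTop) (hyφ : Tendsto (y ∘ φ) atTop (𝓝 a)) :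
      lyapDeriv F V a = 0 :=
    halg.lyapDeriv_eq_zero_of_tendsto hlam hηinit (by linarith) hf2 hF
      (hV.of_le (by norm_num)) hV0 hVdot hMy hφ hyφ
  refine ⟨?_, fun l hl => hlimit tendsto_id hl⟩
  obtain ⟨a, -, φ, hφ, hyφ⟩ :=
    hbdd.isCompact_closure.tendsto_subseq fun n => subset_closure (mem_range_self n)
  exact ⟨a, hlimit hφ.tendsto_atTop hyφ, φ, hφ, hyφ⟩
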